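/- arXiv:1903.10330 — 3 statements merged into one kernel-verified Lean document; each statement's English description precedes it below -/
import Mathlib

section
/- Let f : I → R be a Lipschitz convex function on a nontrivial interval I with endpoints a, b ∈ [−∞, +∞]. Then there exists a finite nonnegative Borel measure ν on I such that for every c in the interior of I and every x ∈ I, f(x) = f(c) + (x − c) f'₊(c) + ∫_{[a,c]∩I} (u − x)₊ ν(du) + ∫_{(c,b]∩I} (x − u)₊ ν(du), where f'₊ denotes the right derivative of f. -/
/-!
The right derivative `g` of `f` is monotone on the interior of `I`, bounded by `L` and
right-continuous there, so it agrees on the interior with a Stieltjes function `F` of finite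
mass; `ν` is `dF` restricted to `I`. For `c ≤ x`, the fundamental theorem of calculus for right
derivatives and Tonelli give
`f x - f c = ∫_c^x g = (x - c) g c + ∫_c^x ν (c, u] du = (x - c) g c + ∫_(c, x] (x - t) ν(dt)`,
and the case `x ≤ c` follows from it since `(b - t) + (t - a) = b - a`.
-/

open MeasureTheory Set Filter Topology

lemma setLIntegral_measure_Ioc_eq_setLIntegral_sub (μ : Measure ℝ) [SFinite μ] (a b : ℝ) :
    ∫⁻ u in Ioc a b, μ (Ioc a u) = ∫⁻ t in Ioc a b, ENNReal.ofReal (b - t) ∂μ := by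
  set T : Set (ℝ × ℝ) := {p | a < p.2 ∧ p.2 ≤ p.1}
  have hT : MeasurableSet T :=
    (measurableSet_lt measurable_const measurable_snd).inter
      (measurableSet_le measurable_snd measurable_fst)
  have hsection : ∀ t, volume.restrict (Ioc a b) ((fun u ↦ (u, t)) ⁻¹' T)
      = (Ioc a b).indicator (fun t ↦ ENNReal.ofReal (b - t)) t := by
    intro t
    by_cases ht : t ∈ Ioc a b
    · have : (fun u ↦ (u, t)) ⁻¹' T ∩ Ioc a b = Icc t b := by
        ext u; simp only [T, mem_inter_iff, mem_preimage, mem_ofPred_eq, mem_Ioc, mem_Icc]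
        constructor
        · rintro ⟨⟨-, h⟩, -, h'⟩; exact ⟨h, h'⟩
        · rintro ⟨h, h'⟩; exact ⟨⟨ht.1, h⟩, ht.1.trans_le h, h'⟩
      rw [Measure.restrict_apply (hT.preimage measurable_prodMk_right), this, Real.volume_Icc,
        indicator_of_mem ht]
    · have : (fun u ↦ (u, t)) ⁻¹' T ∩ Ioc a b = ∅ := by
        ext u
        simp only [T, mem_inter_iff, mem_preimage, mem_ofPred_eq, mem_Ioc, mem_empty_iff_false,
          iff_false]
        rintro ⟨⟨h, h'⟩, -, h''⟩; exact ht ⟨h, h'.trans h''⟩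
      rw [Measure.restrict_apply (hT.preimage measurable_prodMk_right), this, measure_empty,
        indicator_of_notMem ht]
  calc ∫⁻ u in Ioc a b, μ (Ioc a u) = ((volume.restrict (Ioc a b)).prod μ) T := by
        rw [Measure.prod_apply hT]; rfl
    _ = ∫⁻ t in Ioc a b, ENNReal.ofReal (b - t) ∂μ := by
        rw [Measure.prod_apply_symm hT, lintegral_congr hsection,
          lintegral_indicator measurableSet_Ioc]

namespace StieltjesFunction

variable (F : StieltjesFunction ℝ) {f : ℝ → ℝ} {a b : ℝ}

lemma integral_sub_eq_setIntegral (hab : a ≤ b) :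
    ∫ u in a..b, (F u - F a) = ∫ t in Ioc a b, (b - t) ∂F.measure := by
  rw [intervalIntegral.integral_of_le hab,
    integral_eq_lintegral_of_nonneg_ae, integral_eq_lintegral_of_nonneg_ae]
  · congr 1
    rw [← setLIntegral_measure_Ioc_eq_setLIntegral_sub]
    exact setLIntegral_congr_fun measurableSet_Ioc fun u _ ↦ (F.measure_Ioc a u).symm
  · exact ae_restrict_of_forall_mem measurableSet_Ioc fun t ht ↦ sub_nonneg.2 ht.2
  · exact (continuous_const.sub continuous_id).aestronglyMeasurable
  · exact ae_restrict_of_forall_mem measurableSet_Ioc fun u hu ↦ sub_nonneg.2 (F.mono hu.1.le)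
  · exact (F.mono.measurable.sub measurable_const).aestronglyMeasurable

lemma sub_eq_mul_add_setIntegral_of_hasDerivWithinAt_Ioi (hab : a ≤ b)
    (hf : ContinuousOn f (Icc a b)) (hderiv : ∀ u ∈ Ioo a b, HasDerivWithinAt f (F u) (Ioi u) u) :
    f b - f a = (b - a) * F a + ∫ t in Ioc a b, (b - t) ∂F.measure := by
  have hint : IntervalIntegrable F volume a b := (F.mono.monotoneOn _).intervalIntegrable
  rw [← intervalIntegral.integral_eq_sub_of_hasDeriv_right_of_le hab hf hderiv hint,
    ← F.integral_sub_eq_setIntegral hab,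
    intervalIntegral.integral_sub hint intervalIntegrable_const, intervalIntegral.integral_const,
    smul_eq_mul]
  ring

lemma sub_eq_mul_sub_setIntegral_of_hasDerivWithinAt_Ioi (hab : a ≤ b)
    (hf : ContinuousOn f (Icc a b)) (hderiv : ∀ u ∈ Ioo a b, HasDerivWithinAt f (F u) (Ioi u) u) :
    f b - f a = (b - a) * F b - ∫ t in Ioc a b, (t - a) ∂F.measure := by
  have hint : ∀ {g : ℝ → ℝ}, Continuous g → IntegrableOn g (Ioc a b) F.measure :=
    fun hg ↦ hg.integrableOn_Icc.mono_set Ioc_subset_Icc_self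
  have hsum : (∫ t in Ioc a b, (b - t) ∂F.measure) + ∫ t in Ioc a b, (t - a) ∂F.measure
      = (b - a) * (F b - F a) := by
    rw [← integral_add (hint (by fun_prop)) (hint (by fun_prop))]
    simp only [sub_add_sub_cancel, setIntegral_const, measureReal_def, F.measure_Ioc,
      ENNReal.toReal_ofReal (sub_nonneg.2 (F.mono hab)), smul_eq_mul]
    ring
  rw [F.sub_eq_mul_add_setIntegral_of_hasDerivWithinAt_Ioi hab hf hderiv]
  linarith

end StieltjesFunction

section

variable {I : Set ℝ} {x c : ℝ}

lemma setIntegral_restrict_le_max_sub_eq (μ : Measure ℝ) (hI : I.OrdConnected) (hx : x ∈ I)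
    (hc : c ∈ I) :
    ∫ u in {u ∈ I | u ≤ c}, max (u - x) 0 ∂μ.restrict I = ∫ u in Ioc x c, (u - x) ∂μ := by
  have hm : MeasurableSet {u ∈ I | u ≤ c} := hI.measurableSet.inter measurableSet_Iic
  rw [Measure.restrict_restrict hm, ← integral_indicator (hm.inter hI.measurableSet),
    ← integral_indicator measurableSet_Ioc]
  congr 1 with u
  have hIcc : u ∈ Icc x c → u ∈ I := fun h ↦ hI.out hx hc h
  simp only [indicator, mem_inter_iff, mem_ofPred_eq, mem_Ioc, mem_Icc] at hIcc ⊢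
  split_ifs <;> grind

lemma setIntegral_restrict_lt_max_sub_eq (μ : Measure ℝ) (hI : I.OrdConnected) (hx : x ∈ I)
    (hc : c ∈ I) :
    ∫ u in {u ∈ I | c < u}, max (x - u) 0 ∂μ.restrict I = ∫ u in Ioc c x, (x - u) ∂μ := by
  have hm : MeasurableSet {u ∈ I | c < u} := hI.measurableSet.inter measurableSet_Ioi
  rw [Measure.restrict_restrict hm, ← integral_indicator (hm.inter hI.measurableSet),
    ← integral_indicator measurableSet_Ioc]
  congr 1 with u
  have hIcc : u ∈ Icc c x → u ∈ I := fun h ↦ hI.out hc hx h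
  simp only [indicator, mem_inter_iff, mem_ofPred_eq, mem_Ioc, mem_Icc] at hIcc ⊢
  split_ifs <;> grind

end

lemma exists_stieltjesFunction_eqOn {s : Set ℝ} (hs : IsOpen s) {g : ℝ → ℝ} {C : ℝ}
    (hmono : MonotoneOn g s) (hbdd : ∀ x ∈ s, |g x| ≤ C)
    (hcont : ∀ x ∈ s, ContinuousWithinAt g (Ioi x) x) :
    ∃ F : StieltjesFunction ℝ, IsFiniteMeasure F.measure ∧ EqOn F g s := by
  obtain ⟨G, hG, hGg⟩ := hmono.exists_monotone_extension
    ⟨-C, by rintro _ ⟨x, hx, rfl⟩; exact (abs_le.1 (hbdd x hx)).1⟩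
    ⟨C, by rintro _ ⟨x, hx, rfl⟩; exact (abs_le.1 (hbdd x hx)).2⟩
  set H := fun x ↦ max (-C) (min C (G x))
  have hH : Monotone H := fun x y hxy ↦ max_le_max le_rfl (min_le_min le_rfl (hG hxy))
  have hHg : EqOn H g s := fun x hx ↦ by
    simp only [H, ← hGg hx, min_eq_right (abs_le.1 (hbdd x hx)).2,
      max_eq_right (abs_le.1 (hbdd x hx)).1]
  have hHbdd : ∀ x, |H x| ≤ |C| := fun x ↦
    abs_le.2 ⟨(neg_le_neg (le_abs_self C)).trans (le_max_left _ _),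
      max_le (neg_le_abs C) ((min_le_left _ _).trans (le_abs_self C))⟩
  refine ⟨hH.stieltjesFunction, ?_, fun x hx ↦ ?_⟩
  · refine StieltjesFunction.isFiniteMeasure_of_forall_abs_le _ (C := |C|)
      fun x ↦ abs_le.2 ⟨?_, ?_⟩
    · exact (abs_le.1 (hHbdd x)).1.trans (hH.le_rightLim le_rfl)
    · exact (hH.rightLim_le (lt_add_one x)).trans (abs_le.1 (hHbdd (x + 1))).2
  · have hev : g =ᶠ[𝓝[>] x] H :=
      eventually_nhdsWithin_of_eventually_nhds <|
        Filter.mem_of_superset (hs.mem_nhds hx) fun y hy ↦ (hHg hy).symm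
    exact rightLim_eq_of_tendsto ((hcont x hx).congr' hev)

lemma HasDerivWithinAt.abs_le_of_lipschitz {f : ℝ → ℝ} {f' c L : ℝ} {s : Set ℝ}
    (hf : HasDerivWithinAt f f' (Ioi c) c) (hs : s ∈ 𝓝 c)
    (hlip : ∀ x ∈ s, ∀ y ∈ s, |f x - f y| ≤ L * |x - y|) : |f'| ≤ L := by
  refine le_of_tendsto (hasDerivWithinAt_iff_tendsto_slope' self_notMem_Ioi |>.1 hf).abs ?_
  filter_upwards [self_mem_nhdsWithin, nhdsWithin_le_nhds hs] with y (hcy : c < y) hy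
  rw [slope_def_field, abs_div, div_le_iff₀ (abs_pos.2 (sub_ne_zero.2 hcy.ne'))]
  exact hlip y hy c (mem_of_mem_nhds hs)

lemma ConvexOn.continuousWithinAt_rightDeriv {S : Set ℝ} {f : ℝ → ℝ} {x : ℝ}
    (hfc : ConvexOn ℝ S f) (hx : x ∈ interior S) :
    ContinuousWithinAt (fun y ↦ derivWithin f (Ioi y) y) (Ioi x) x := by
  have hS : interior S ∈ 𝓝 x := isOpen_interior.mem_nhds hx
  refine tendsto_order.2 ⟨fun a ha ↦ ?_, fun b hb ↦ ?_⟩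
  · filter_upwards [self_mem_nhdsWithin, nhdsWithin_le_nhds hS] with y (hxy : x < y) hy
    exact ha.trans_le (hfc.monotoneOn_rightDeriv hx hy hxy.le)
  · have hslope_tendsto := (hasDerivWithinAt_iff_tendsto_slope' self_notMem_Ioi).1
      (hfc.hasDerivWithinAt_rightDeriv_of_mem_interior hx)
    obtain ⟨z, hxzb, hxz, hz⟩ : ∃ z, slope f x z < b ∧ x < z ∧ z ∈ S :=
      ((hslope_tendsto.eventually (gt_mem_nhds hb)).and <| eventually_mem_nhdsWithin.and <|
        nhdsWithin_le_nhds (mem_interior_iff_mem_nhds.1 hx)).exists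
    have hslope : ContinuousAt (fun y ↦ slope f y z) x := by
      simp only [slope_def_field]
      exact (continuousAt_const.sub ((hfc.continuousOn_interior).continuousAt hS)).div
        (continuousAt_const.sub continuousAt_id) (sub_ne_zero.2 hxz.ne')
    filter_upwards [nhdsWithin_le_nhds (hslope.eventually (gt_mem_nhds hxzb)),
      nhdsWithin_le_nhds hS, nhdsWithin_le_nhds (gt_mem_nhds hxz)] with y hyb hy hyz
    exact (hfc.rightDeriv_le_slope_of_mem_interior hy hz hyz).trans_lt hyb

theorem stmt3_general (I : Set ℝ) (f : ℝ → ℝ) (L : ℝ) (hconv : ConvexOn ℝ I f)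
    (hlip : ∀ x ∈ I, ∀ y ∈ I, |f x - f y| ≤ L * |x - y|) :
    ∃ ν : Measure ℝ, IsFiniteMeasure ν ∧ ν Iᶜ = 0 ∧
      ∀ c ∈ interior I, ∀ x ∈ I,
        f x = f c + (x - c) * derivWithin f (Set.Ici c) c
          + (∫ u in {u ∈ I | u ≤ c}, max (u - x) 0 ∂ν)
          + ∫ u in {u ∈ I | c < u}, max (x - u) 0 ∂ν := by
  have hI : I.OrdConnected := hconv.1.ordConnected
  obtain ⟨F, hF, hFeq⟩ :=
    exists_stieltjesFunction_eqOn isOpen_interior hconv.monotoneOn_rightDeriv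
    (fun c hc ↦ (hconv.hasDerivWithinAt_rightDeriv_of_mem_interior hc).abs_le_of_lipschitz
      (mem_interior_iff_mem_nhds.1 hc) hlip)
    (fun c hc ↦ hconv.continuousWithinAt_rightDeriv hc)
  have hcont : ContinuousOn f I := (LipschitzOnWith.of_dist_le' hlip).continuousOn
  have hderiv {a b : ℝ} (ha : a ∈ I) (hb : b ∈ I) :
      ∀ u ∈ Ioo a b, HasDerivWithinAt f (F u) (Ioi u) u := fun u hu ↦ by
    have hu : u ∈ interior I := interior_mono (hI.out ha hb) (by rwa [interior_Icc])
    rw [hFeq hu]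
    exact hconv.hasDerivWithinAt_rightDeriv_of_mem_interior hu
  refine ⟨F.measure.restrict I, inferInstance, ?_, fun c hc x hx ↦ ?_⟩
  · rw [Measure.restrict_apply' hI.measurableSet, compl_inter_self, measure_empty]
  have hcI := interior_subset hc
  have hFc : F c = derivWithin f (Ioi c) c := hFeq hc
  rw [setIntegral_restrict_le_max_sub_eq _ hI hx hcI,
    setIntegral_restrict_lt_max_sub_eq _ hI hx hcI, ← derivWithin_Ioi_eq_Ici, ← hFc]
  rcases le_total c x with hcx | hxc
  · have := F.sub_eq_mul_add_setIntegral_of_hasDerivWithinAt_Ioi hcx (hcont.mono (hI.out hcI hx))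
      (hderiv hcI hx)
    rw [Ioc_eq_empty (not_lt.2 hcx), Measure.restrict_empty, integral_zero_measure]
    linarith
  · have := F.sub_eq_mul_sub_setIntegral_of_hasDerivWithinAt_Ioi hxc (hcont.mono (hI.out hx hcI))
      (hderiv hx hcI)
    rw [Ioc_eq_empty (not_lt.2 hxc), Measure.restrict_empty, integral_zero_measure]
    linarith

/-- Carr–Madan type representation for a Lipschitz convex function on a
nontrivial interval `I` with endpoints `a, b`: there is a finite nonnegative Borel measure
`ν` on `I` such that for every `c` in the interior of `I` and `x ∈ I`,
`f x = f c + (x−c) f'₊(c) + ∫_{[a,c]∩I} (u−x)₊ ν(du) + ∫_{(c,b]∩I} (x−u)₊ ν(du)`,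
where `f'₊` is the right derivative `derivWithin f (Set.Ici c) c`. -/
theorem stmt3 (I : Set ℝ) (hI : I.OrdConnected) (hne : ∃ a ∈ I, ∃ b ∈ I, a < b)
    (f : ℝ → ℝ) (L : ℝ) (hconv : ConvexOn ℝ I f)
    (hlip : ∀ x ∈ I, ∀ y ∈ I, |f x - f y| ≤ L * |x - y|) :
    ∃ ν : Measure ℝ, IsFiniteMeasure ν ∧ ν Iᶜ = 0 ∧
      ∀ c ∈ interior I, ∀ x ∈ I,
        f x = f c + (x - c) * derivWithin f (Set.Ici c) c
          + (∫ u in {u ∈ I | u ≤ c}, max (u - x) 0 ∂ν)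
          + ∫ u in {u ∈ I | c < u}, max (x - u) 0 ∂ν :=
  stmt3_general I f L hconv hlip
end

section
/- Let f : R → R be a continuous piecewise affine function which is affine on each of the intervals determined by finitely many break points a_1 < ⋯ < a_ℓ. Let X be an integrable real random variable and Γ = {x_1, …, x_N} a finite grid with Voronoi cells C_1, …, C_N such that the induced quantization \hat{X} satisfies the cell-wise stationarity E[(X − x_i) 1_{X ∈ C_i}] = 0 for every i. Then E[f(X)] − E[f(\hat{X})] = Σ_{i ∈ J} ∫_{C_i} (f(ξ) − f(x_i)) P_X(dξ), where J is the set of indices i such that C_i contains a break point, and consequently |E[f(X)] − E[f(\hat{X})]| ≤ ℓ · [f]_Lip · max_{i ∈ J} ∫_{C_i} |ξ − x_i| P_X(dξ). -/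
open MeasureTheory Classical

/-! On a cell `C` where `f` is affine, `f ξ - f x = α (ξ - x)`, so stationarity
`∫_C (ξ - x) dμ = 0` kills the cell's contribution to the weak error `∫ (f - f(x̂)) dμ`.
Only the cells meeting a break point survive; disjointness of the cells leaves at most `ℓ` of them,
and the Lipschitz bound controls each by `[f]_Lip ∫_C |ξ - x| dμ`. -/

section Partition

variable {α ι : Type*} [MeasurableSpace α] [Fintype ι] {μ : Measure α} [IsFiniteMeasure μ]
  {C : ι → Set α}

theorem integral_sub_sum_mul_measure_eq_sum_setIntegral_sub (hC : ∀ i, MeasurableSet (C i))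
    (hdisj : Pairwise (Function.onFun Disjoint C)) (hcover : ⋃ i, C i = Set.univ)
    {f : α → ℝ} (hf : Integrable f μ) (x : ι → α) :
    (∫ ξ, f ξ ∂μ) - ∑ i, f (x i) * (μ (C i)).toReal = ∑ i, ∫ ξ in C i, (f ξ - f (x i)) ∂μ := by
  rw [← setIntegral_univ, ← hcover, integral_iUnion_fintype hC hdisj fun _ => hf.integrableOn,
    ← Finset.sum_sub_distrib]
  refine Finset.sum_congr rfl fun i _ => ?_
  rw [integral_sub hf.integrableOn (integrableOn_const (measure_ne_top _ _)), setIntegral_const,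
    smul_eq_mul, mul_comm, measureReal_def]

end Partition

theorem card_filter_exists_mem_le {ι κ α : Type*} [Fintype ι] [Fintype κ] {C : ι → Set α}
    (hdisj : Pairwise (Function.onFun Disjoint C)) (a : κ → α) :
    (Finset.univ.filter fun i => ∃ k, a k ∈ C i).card ≤ Fintype.card κ := by
  have hsub : (Finset.univ.filter fun i => ∃ k, a k ∈ C i)
      ⊆ Finset.univ.biUnion fun k => Finset.univ.filter fun i => a k ∈ C i := by
    intro i hi
    simpa using hi
  have hle_one : ∀ k, (Finset.univ.filter fun i => a k ∈ C i).card ≤ 1 := by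
    refine fun k => Finset.card_le_one.2 fun i hi j hj => ?_
    by_contra hij
    exact Set.disjoint_left.1 (hdisj hij) (Finset.mem_filter.1 hi).2 (Finset.mem_filter.1 hj).2
  calc _ ≤ _ := Finset.card_le_card hsub
    _ ≤ ∑ k, (Finset.univ.filter fun i => a k ∈ C i).card := Finset.card_biUnion_le
    _ ≤ ∑ _k : κ, 1 := Finset.sum_le_sum fun k _ => hle_one k
    _ = Fintype.card κ := by simp

section Cell

variable {μ : Measure ℝ} {s : Set ℝ} {c : ℝ}

theorem setIntegral_sub_eq_zero_of_affineOn (hs : MeasurableSet s) (hc : c ∈ s)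
    (hstat : ∫ ξ in s, (ξ - c) ∂μ = 0) {f : ℝ → ℝ} {α β : ℝ} (hf : ∀ ξ ∈ s, f ξ = α * ξ + β) :
    ∫ ξ in s, (f ξ - f c) ∂μ = 0 := by
  have hlin : Set.EqOn (fun ξ => f ξ - f c) (fun ξ => α * (ξ - c)) s := by
    intro ξ hξ
    simp only [hf ξ hξ, hf c hc]
    ring
  rw [setIntegral_congr_fun hs hlin, integral_const_mul, hstat, mul_zero]

theorem abs_setIntegral_sub_le_of_abs_sub_le [IsFiniteMeasure μ] {f : ℝ → ℝ} {L : ℝ}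
    (hlip : ∀ u v, |f u - f v| ≤ L * |u - v|) (hf : Integrable f μ)
    (hid : Integrable (fun ξ : ℝ => ξ) μ) :
    |∫ ξ in s, (f ξ - f c) ∂μ| ≤ L * ∫ ξ in s, |ξ - c| ∂μ := by
  have hfc : IntegrableOn (fun ξ => f ξ - f c) s μ := (hf.sub (integrable_const _)).integrableOn
  have hidc : IntegrableOn (fun ξ => ξ - c) s μ := (hid.sub (integrable_const _)).integrableOn
  calc |∫ ξ in s, (f ξ - f c) ∂μ| ≤ ∫ ξ in s, |f ξ - f c| ∂μ := abs_integral_le_integral_abs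
    _ ≤ ∫ ξ in s, L * |ξ - c| ∂μ :=
        setIntegral_mono hfc.abs (hidc.abs.const_mul L) fun ξ => hlip ξ c
    _ = L * ∫ ξ in s, |ξ - c| ∂μ := integral_const_mul _ _

end Cell

theorem stmt7_general (μ : Measure ℝ) [IsProbabilityMeasure μ] {N ℓ : ℕ}
    (x : Fin N → ℝ) (C : Fin N → Set ℝ)
    (hCmeas : ∀ i, MeasurableSet (C i))
    (hdisj : Pairwise (Function.onFun Disjoint C))
    (hcover : (⋃ i, C i) = Set.univ)
    (hx : ∀ i, x i ∈ C i)
    (hstat : ∀ i, ∫ ξ in C i, (ξ - x i) ∂μ = 0)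
    (f : ℝ → ℝ)
    (L : ℝ) (hlip : ∀ u v, |f u - f v| ≤ L * |u - v|)
    (a : Fin ℓ → ℝ)
    (haff : ∀ i, (∀ k, a k ∉ C i) → ∃ α β : ℝ, ∀ ξ ∈ C i, f ξ = α * ξ + β)
    (hintf : Integrable f μ) (hintid : Integrable (fun ξ : ℝ => ξ) μ) :
    (∫ ξ, f ξ ∂μ) - (∑ i, f (x i) * (μ (C i)).toReal) =
        ∑ i ∈ Finset.univ.filter (fun i => ∃ k, a k ∈ C i),
          ∫ ξ in C i, (f ξ - f (x i)) ∂μ ∧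
      ∀ B : ℝ, 0 ≤ B →
        (∀ i ∈ Finset.univ.filter (fun i => ∃ k, a k ∈ C i),
            (∫ ξ in C i, |ξ - x i| ∂μ) ≤ B) →
        |(∫ ξ, f ξ ∂μ) - ∑ i, f (x i) * (μ (C i)).toReal| ≤ ℓ * L * B := by
  set J := Finset.univ.filter fun i => ∃ k, a k ∈ C i
  have hL : 0 ≤ L := by simpa using (abs_nonneg _).trans (hlip 1 0)
  have hlocal : (∫ ξ, f ξ ∂μ) - ∑ i, f (x i) * (μ (C i)).toReal
      = ∑ i ∈ J, ∫ ξ in C i, (f ξ - f (x i)) ∂μ := by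
    rw [integral_sub_sum_mul_measure_eq_sum_setIntegral_sub hCmeas hdisj hcover hintf x]
    refine (Finset.sum_filter_of_ne fun i _ hi => ?_).symm
    by_contra! hno
    obtain ⟨α, β, hαβ⟩ := haff i hno
    exact hi (setIntegral_sub_eq_zero_of_affineOn (hCmeas i) (hx i) (hstat i) hαβ)
  refine ⟨hlocal, fun B hB hJB => ?_⟩
  have hcard : J.card ≤ ℓ := by
    convert (card_filter_exists_mem_le hdisj a).trans_eq (Fintype.card_fin ℓ)
  rw [hlocal]
  calc |∑ i ∈ J, ∫ ξ in C i, (f ξ - f (x i)) ∂μ|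
      ≤ ∑ i ∈ J, |∫ ξ in C i, (f ξ - f (x i)) ∂μ| := Finset.abs_sum_le_sum_abs _ _
    _ ≤ J.card • (L * B) := Finset.sum_le_card_nsmul _ _ _ fun i hi =>
        (abs_setIntegral_sub_le_of_abs_sub_le hlip hintf hintid).trans
          (mul_le_mul_of_nonneg_left (hJB i hi) hL)
    _ ≤ ℓ * L * B := by
        rw [nsmul_eq_mul, mul_assoc]
        exact mul_le_mul_of_nonneg_right (by exact_mod_cast hcard) (mul_nonneg hL hB)

/-- for a continuous piecewise affine Lipschitz function `f` with break points
`a_1, …, a_ℓ` and a cell-wise stationary Voronoi quantization (grid `x i`, cells `C i`,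
`∫_{C i} (ξ − x i) dμ = 0`), the weak error localizes to the cells containing a break:
`E[f(X)] − E[f(X̂)] = ∑_{i ∈ J} ∫_{C i} (f ξ − f (x i)) dμ`, and consequently it is bounded
by `ℓ · [f]_Lip · max_{i ∈ J} ∫_{C i} |ξ − x i| dμ`. -/
theorem stmt7 (μ : Measure ℝ) [IsProbabilityMeasure μ] {N ℓ : ℕ}
    (x : Fin N → ℝ) (C : Fin N → Set ℝ)
    (hCmeas : ∀ i, MeasurableSet (C i))
    (hdisj : Pairwise (Function.onFun Disjoint C))
    (hcover : (⋃ i, C i) = Set.univ)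
    (hx : ∀ i, x i ∈ C i)
    (hstat : ∀ i, ∫ ξ in C i, (ξ - x i) ∂μ = 0)
    (f : ℝ → ℝ) (hfcont : Continuous f)
    (L : ℝ) (hlip : ∀ u v, |f u - f v| ≤ L * |u - v|)
    (a : Fin ℓ → ℝ)
    (haff : ∀ i, (∀ k, a k ∉ C i) → ∃ α β : ℝ, ∀ ξ ∈ C i, f ξ = α * ξ + β)
    (hintf : Integrable f μ) (hintid : Integrable (fun ξ : ℝ => ξ) μ) :
    (∫ ξ, f ξ ∂μ) - (∑ i, f (x i) * (μ (C i)).toReal) =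
        ∑ i ∈ Finset.univ.filter (fun i => ∃ k, a k ∈ C i),
          ∫ ξ in C i, (f ξ - f (x i)) ∂μ ∧
      ∀ B : ℝ, 0 ≤ B →
        (∀ i ∈ Finset.univ.filter (fun i => ∃ k, a k ∈ C i),
            (∫ ξ in C i, |ξ - x i| ∂μ) ≤ B) →
        |(∫ ξ, f ξ ∂μ) - ∑ i, f (x i) * (μ (C i)).toReal| ≤ ℓ * L * B :=
  stmt7_general μ x C hCmeas hdisj hcover hx hstat f L hlip a haff hintf hintid
end

section
/- Let f : I → R be convex and Lipschitz on an interval I, with second-derivative measure ν as in the Carr–Madan representation, and let \hat{X} be a cell-wise stationary Voronoi quantization of X on ordered grid x_1 < ⋯ < x_N with cells C_i = (x_{i−1/2}, x_{i+1/2}]. Then 0 ≤ E[f(X)] − E[f(\hat{X})] ≤ Σ_{i=1}^N E[|x_i − X| 1_{X ∈ C_i}] ν(C_i). -/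
/-!
Expand `f` around the quantization point `x i` by the Carr–Madan formula. By cell-wise
stationarity the affine part integrates over the cell `C i` to exactly `f (x i) * μ (C i)`, so
`E[f(X)] − E[f(X̂)]` is the sum over the cells of the integrated remainder. The remainder is
nonnegative, and when `ξ` and `x i` lie in the same cell only the `ν`-mass of that cell between
them contributes, with integrand at most `|x i − ξ|`.
-/

open MeasureTheory Set

section Cells

variable {β : Type*} {n : ℕ} {c : Fin (n + 1) → β}

theorem Monotone.pairwise_disjoint_on_Ioc_castSucc_succ [Preorder β] (hc : Monotone c) :
    Pairwise (Function.onFun Disjoint fun i : Fin n => Ioc (c i.castSucc) (c i.succ)) := by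
  intro i j hij
  simpa [Function.onFun] using hc.pairwise_disjoint_on_Ioc_succ ((Fin.castSucc_injective n).ne hij)

theorem Monotone.iUnion_Ioc_castSucc_succ [LinearOrder β] (hc : Monotone c) :
    ⋃ i : Fin n, Ioc (c i.castSucc) (c i.succ) = Ioc (c 0) (c (Fin.last n)) := by
  rw [← hc.biUnion_Ico_Ioc_map_succ 0 (Fin.last n)]
  ext ξ
  simp only [mem_iUnion, mem_Ico, Fin.zero_le, true_and, exists_prop]
  constructor
  · rintro ⟨i, hi⟩
    exact ⟨i.castSucc, Fin.castSucc_lt_last i, by rwa [Fin.orderSucc_castSucc]⟩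
  · rintro ⟨j, hj, hξ⟩
    obtain ⟨i, rfl⟩ := Fin.eq_castSucc_of_ne_last hj.ne
    exact ⟨i, by rwa [Fin.orderSucc_castSucc] at hξ⟩

end Cells

theorem integral_eq_sum_setIntegral_Ioc_castSucc_succ {E : Type*} [NormedAddCommGroup E]
    [NormedSpace ℝ E] {μ : Measure ℝ} {n : ℕ} {c : Fin (n + 1) → ℝ} (hc : Monotone c)
    (hμ : ∀ᵐ ξ ∂μ, ξ ∈ Ioc (c 0) (c (Fin.last n))) {f : ℝ → E} (hf : Integrable f μ) :
    ∫ ξ, f ξ ∂μ = ∑ i : Fin n, ∫ ξ in Ioc (c i.castSucc) (c i.succ), f ξ ∂μ := by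
  have := integral_iUnion_fintype (fun _ => measurableSet_Ioc)
    hc.pairwise_disjoint_on_Ioc_castSucc_succ fun _ => hf.integrableOn
  rwa [hc.iUnion_Ioc_castSucc_succ, Measure.restrict_eq_self_of_ae_mem hμ] at this

theorem setIntegral_le_mul_measureReal_inter {α : Type*} [MeasurableSpace α] {ν : Measure α}
    [IsFiniteMeasure ν] {S T : Set α} (hS : MeasurableSet S) (hT : MeasurableSet T)
    {h : α → ℝ} (hm : AEStronglyMeasurable h (ν.restrict T)) {K : ℝ}
    (h₀ : ∀ u ∈ T, 0 ≤ h u) (hK : ∀ u ∈ T, h u ≤ S.indicator (fun _ => K) u) :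
    ∫ u in T, h u ∂ν ≤ K * ν.real (S ∩ T) := by
  have hind : IntegrableOn (S.indicator fun _ => K) T ν :=
    (integrable_const K).indicator hS
  have hint : IntegrableOn h T ν := hind.mono' hm <| (ae_restrict_iff' hT).2 <|
    ae_of_all _ fun u hu => by rw [Real.norm_of_nonneg (h₀ u hu)]; exact hK u hu
  calc ∫ u in T, h u ∂ν ≤ ∫ u in T, S.indicator (fun _ => K) u ∂ν :=
        setIntegral_mono_on hint hind hT hK
    _ = K * ν.real (S ∩ T) := by
      rw [integral_indicator_const K hS, measureReal_restrict_apply hS, smul_eq_mul, mul_comm]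

noncomputable def carrMadanRemainder (ν : Measure ℝ) (c ξ : ℝ) : ℝ :=
  (∫ u in Iic c, max (u - ξ) 0 ∂ν) + ∫ u in Ioi c, max (ξ - u) 0 ∂ν

theorem carrMadanRemainder_nonneg (ν : Measure ℝ) (c ξ : ℝ) : 0 ≤ carrMadanRemainder ν c ξ :=
  add_nonneg (integral_nonneg fun _ => le_max_right _ _) (integral_nonneg fun _ => le_max_right _ _)

theorem carrMadanRemainder_le_of_mem_Ioc (ν : Measure ℝ) [IsFiniteMeasure ν] {a b c ξ : ℝ}
    (hc : c ∈ Ioc a b) (hξ : ξ ∈ Ioc a b) :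
    carrMadanRemainder ν c ξ ≤ |c - ξ| * ν.real (Ioc a b) := by
  have hleft : ∫ u in Iic c, max (u - ξ) 0 ∂ν ≤ |c - ξ| * ν.real (Ioc a b ∩ Iic c) := by
    refine setIntegral_le_mul_measureReal_inter measurableSet_Ioc measurableSet_Iic
      (by fun_prop) (fun _ _ => le_max_right _ _) fun u hu => ?_
    rcases le_or_gt u ξ with huξ | hξu
    · rw [max_eq_right (by linarith)]
      exact indicator_nonneg (fun _ _ => abs_nonneg _) u
    · rw [indicator_of_mem (show u ∈ Ioc a b from ⟨hξ.1.trans hξu, le_trans hu hc.2⟩), max_le_iff]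
      exact ⟨(sub_le_sub_right hu ξ).trans (le_abs_self _), abs_nonneg _⟩
  have hright : ∫ u in Ioi c, max (ξ - u) 0 ∂ν ≤ |c - ξ| * ν.real (Ioc a b ∩ Ioi c) := by
    refine setIntegral_le_mul_measureReal_inter measurableSet_Ioc measurableSet_Ioi
      (by fun_prop) (fun _ _ => le_max_right _ _) fun u hu => ?_
    rcases le_or_gt ξ u with hξu | huξ
    · rw [max_eq_right (by linarith)]
      exact indicator_nonneg (fun _ _ => abs_nonneg _) u
    · rw [indicator_of_mem (show u ∈ Ioc a b from ⟨hc.1.trans hu, huξ.le.trans hξ.2⟩),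
        max_le_iff, abs_sub_comm]
      exact ⟨(sub_le_sub_left hu.le ξ).trans (le_abs_self _), abs_nonneg _⟩
  have hsplit : ν.real (Ioc a b ∩ Iic c) + ν.real (Ioc a b ∩ Ioi c) = ν.real (Ioc a b) := by
    rw [← compl_Iic, ← sdiff_eq, measureReal_inter_add_sdiff measurableSet_Iic]
  calc carrMadanRemainder ν c ξ
      ≤ |c - ξ| * ν.real (Ioc a b ∩ Iic c) + |c - ξ| * ν.real (Ioc a b ∩ Ioi c) :=
        add_le_add hleft hright
    _ = |c - ξ| * ν.real (Ioc a b) := by rw [← mul_add, hsplit]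

section Stationarity

variable {μ : Measure ℝ} {f g : ℝ → ℝ} {x₀ k : ℝ}

theorem MeasureTheory.Integrable.of_eq_affine_add [IsFiniteMeasure μ] (hf : Integrable f μ)
    (hid : Integrable (fun ξ => ξ) μ) (hexp : ∀ ξ, f ξ = f x₀ + (ξ - x₀) * k + g ξ) :
    Integrable g μ := by
  have : g = fun ξ => f ξ - (f x₀ + (ξ - x₀) * k) := funext fun ξ => by linarith [hexp ξ]
  rw [this]
  exact hf.sub ((integrable_const _).add ((hid.sub (integrable_const _)).mul_const k))

theorem setIntegral_sub_mul_measureReal_eq_of_stationary [IsFiniteMeasure μ] {C : Set ℝ}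
    (hf : IntegrableOn f C μ) (hid : IntegrableOn (fun ξ => ξ) C μ)
    (hexp : ∀ ξ, f ξ = f x₀ + (ξ - x₀) * k + g ξ) (hstat : ∫ ξ in C, (ξ - x₀) ∂μ = 0) :
    ∫ ξ in C, f ξ ∂μ - f x₀ * μ.real C = ∫ ξ in C, g ξ ∂μ := by
  have hlin : IntegrableOn (fun ξ => (ξ - x₀) * k) C μ := (hid.sub (integrable_const _)).mul_const k
  have hg : IntegrableOn g C μ := Integrable.of_eq_affine_add hf hid hexp
  have haff : IntegrableOn (fun ξ => f x₀ + (ξ - x₀) * k) C μ := (integrable_const _).add hlin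
  rw [integral_congr_ae (ae_of_all _ hexp), integral_add haff hg,
    integral_add (integrable_const _) hlin, integral_mul_const, hstat, setIntegral_const,
    smul_eq_mul]
  ring

end Stationarity

theorem setIntegral_carrMadanRemainder_le {μ ν : Measure ℝ} [IsFiniteMeasure μ] [IsFiniteMeasure ν]
    {a b x₀ : ℝ} (hx₀ : x₀ ∈ Ioc a b) (hR : IntegrableOn (carrMadanRemainder ν x₀) (Ioc a b) μ)
    (hid : IntegrableOn (fun ξ => ξ) (Ioc a b) μ) :
    ∫ ξ in Ioc a b, carrMadanRemainder ν x₀ ξ ∂μ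
      ≤ (∫ ξ in Ioc a b, |x₀ - ξ| ∂μ) * ν.real (Ioc a b) := by
  rw [← integral_mul_const]
  exact setIntegral_mono_on hR (((integrable_const x₀).sub hid).abs.mul_const _) measurableSet_Ioc
    fun ξ hξ => carrMadanRemainder_le_of_mem_Ioc ν hx₀ hξ

theorem stmt17_general (μ : Measure ℝ) [IsProbabilityMeasure μ] {n : ℕ}
    (c : Fin (n + 1) → ℝ) (hc : Monotone c) (x : Fin n → ℝ)
    (hx : ∀ i : Fin n, x i ∈ Set.Ioc (c i.castSucc) (c i.succ))
    (hsupp : μ (Set.Ioc (c 0) (c (Fin.last n))) = 1)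
    (hstat : ∀ i : Fin n, ∫ ξ in Set.Ioc (c i.castSucc) (c i.succ), (ξ - x i) ∂μ = 0)
    (f : ℝ → ℝ)
    (d : ℝ → ℝ) (ν : Measure ℝ) [IsFiniteMeasure ν]
    (hrep : ∀ cp ξ : ℝ, f ξ = f cp + (ξ - cp) * d cp
        + (∫ u in Set.Iic cp, max (u - ξ) 0 ∂ν) + ∫ u in Set.Ioi cp, max (ξ - u) 0 ∂ν)
    (hintf : Integrable f μ) (hintid : Integrable (fun ξ : ℝ => ξ) μ) :
    0 ≤ (∫ ξ, f ξ ∂μ) -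
        ∑ i : Fin n, f (x i) * (μ (Set.Ioc (c i.castSucc) (c i.succ))).toReal ∧
      (∫ ξ, f ξ ∂μ) -
          ∑ i : Fin n, f (x i) * (μ (Set.Ioc (c i.castSucc) (c i.succ))).toReal ≤
        ∑ i : Fin n, (∫ ξ in Set.Ioc (c i.castSucc) (c i.succ), |x i - ξ| ∂μ) *
          (ν (Set.Ioc (c i.castSucc) (c i.succ))).toReal := by
  have hexp (x₀ ξ : ℝ) : f ξ = f x₀ + (ξ - x₀) * d x₀ + carrMadanRemainder ν x₀ ξ :=
    (hrep x₀ ξ).trans (add_assoc _ _ _)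
  have hμ : ∀ᵐ ξ ∂μ, ξ ∈ Ioc (c 0) (c (Fin.last n)) := by
    rw [ae_mem_iff_measure_eq measurableSet_Ioc.nullMeasurableSet, hsupp, measure_univ]
  have hcell (i : Fin n) :
      ∫ ξ in Ioc (c i.castSucc) (c i.succ), f ξ ∂μ
          - f (x i) * μ.real (Ioc (c i.castSucc) (c i.succ))
        = ∫ ξ in Ioc (c i.castSucc) (c i.succ), carrMadanRemainder ν (x i) ξ ∂μ :=
    setIntegral_sub_mul_measureReal_eq_of_stationary hintf.integrableOn hintid.integrableOn
      (hexp (x i)) (hstat i)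
  simp only [← measureReal_def]
  rw [integral_eq_sum_setIntegral_Ioc_castSucc_succ hc hμ hintf, ← Finset.sum_sub_distrib,
    Finset.sum_congr rfl fun i _ => hcell i]
  exact ⟨Finset.sum_nonneg fun i _ => setIntegral_nonneg measurableSet_Ioc fun ξ _ =>
      carrMadanRemainder_nonneg ν (x i) ξ,
    Finset.sum_le_sum fun i _ => setIntegral_carrMadanRemainder_le (hx i)
      (hintf.of_eq_affine_add hintid (hexp (x i))).integrableOn hintid.integrableOn⟩

/-- for a convex Lipschitz function `f` with Carr–Madan representation with
second-derivative measure `ν` (`ν((x,y]) = f'₊(y) − f'₊(x)`, `d` playing the role of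
`f'₊`), and a cell-wise stationary Voronoi quantization on the ordered grid `x i` with
interval cells `C i = (c i, c (i+1)]`,
`0 ≤ E[f(X)] − E[f(X̂)] ≤ ∑_i E[|x_i − X| 1_{X ∈ C_i}] ν(C_i)`. -/
theorem stmt17 (μ : Measure ℝ) [IsProbabilityMeasure μ] {n : ℕ}
    (c : Fin (n + 1) → ℝ) (hc : Monotone c) (x : Fin n → ℝ)
    (hx : ∀ i : Fin n, x i ∈ Set.Ioc (c i.castSucc) (c i.succ))
    (hxmono : StrictMono x)
    (hsupp : μ (Set.Ioc (c 0) (c (Fin.last n))) = 1)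
    (hstat : ∀ i : Fin n, ∫ ξ in Set.Ioc (c i.castSucc) (c i.succ), (ξ - x i) ∂μ = 0)
    (f : ℝ → ℝ) (hconv : ConvexOn ℝ Set.univ f)
    (L : ℝ) (hlip : ∀ u v, |f u - f v| ≤ L * |u - v|)
    (d : ℝ → ℝ) (ν : Measure ℝ) [IsFiniteMeasure ν]
    (hν : ∀ u v : ℝ, u ≤ v → ν (Set.Ioc u v) = ENNReal.ofReal (d v - d u))
    (hrep : ∀ cp ξ : ℝ, f ξ = f cp + (ξ - cp) * d cp
        + (∫ u in Set.Iic cp, max (u - ξ) 0 ∂ν) + ∫ u in Set.Ioi cp, max (ξ - u) 0 ∂ν)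
    (hintf : Integrable f μ) (hintid : Integrable (fun ξ : ℝ => ξ) μ) :
    0 ≤ (∫ ξ, f ξ ∂μ) -
        ∑ i : Fin n, f (x i) * (μ (Set.Ioc (c i.castSucc) (c i.succ))).toReal ∧
      (∫ ξ, f ξ ∂μ) -
          ∑ i : Fin n, f (x i) * (μ (Set.Ioc (c i.castSucc) (c i.succ))).toReal ≤
        ∑ i : Fin n, (∫ ξ in Set.Ioc (c i.castSucc) (c i.succ), |x i - ξ| ∂μ) *
          (ν (Set.Ioc (c i.castSucc) (c i.succ))).toReal :=
  stmt17_general μ c hc x hx hsupp hstat f d ν hrep hintf hintid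
end
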